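/- arXiv:1209.4283 — 4 statements merged into one kernel-verified Lean document; each statement's English description precedes it below -/
import Mathlib

section
/- Let n be an odd positive integer, ζ = e^{2πi/n}, and A, B nonzero integers. Then the sum over j with gcd(n,A) | j, 1 ≤ j ≤ (n-1)/2, and t with gcd(n,A) | t, 1 ≤ t ≤ n, of ζ^{-Bjt/(2A)} equals (n / (2·gcd(n,A))) · (gcd(n/gcd(n,A), B) - 1). -/
/-!
Write `n = d m`. Since `ζ ^ x.val` is the standard additive character of `ZMod n`, and on multiples
of `d` it factors through `ZMod m`, each inner sum is a complete character sum over `ZMod m`: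
it is `m` if `m ∣ B u` and `0` otherwise, because `2A/d` and its `ZMod n`-inverse both reduce to
units modulo `m`. The `u ≤ (m - 1)/2` with `m ∣ B u` are the multiples of `m / gcd(m, B)`, and
there are `(gcd(m, B) - 1)/2` of them.
-/

open Finset

lemma sum_filter_dvd_Icc_one {M : Type*} [AddCommMonoid M] {d : ℕ} (hd : 0 < d) (N : ℕ)
    (f : ℕ → M) :
    ∑ j ∈ (Icc 1 N).filter (d ∣ ·), f j = ∑ u ∈ Icc 1 (N / d), f (d * u) := by
  have himage : (Icc 1 N).filter (d ∣ ·) = (Icc 1 (N / d)).image (d * ·) := by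
    ext j
    simp only [mem_filter, mem_image, mem_Icc, Nat.le_div_iff_mul_le hd]
    constructor
    · rintro ⟨⟨h1, h2⟩, u, rfl⟩
      exact ⟨u, ⟨Nat.pos_of_mul_pos_left h1, by linarith⟩, rfl⟩
    · rintro ⟨u, ⟨h1, h2⟩, rfl⟩
      exact ⟨⟨Nat.mul_pos hd h1, by linarith⟩, dvd_mul_right d u⟩
  rw [himage, sum_image fun a _ b _ h => Nat.eq_of_mul_eq_mul_left hd h]

lemma Nat.odd_mul_sub_one_div_two_div {a b : ℕ} (ha : Odd a) (hb : Odd b) :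
    (a * b - 1) / 2 / a = (b - 1) / 2 := by
  obtain ⟨x, rfl⟩ := ha
  obtain ⟨y, rfl⟩ := hb
  rw [Nat.div_div_eq_div_mul,
    show (2 * x + 1) * (2 * y + 1) - 1 = 2 * (2 * x + 1) * y + 2 * x by ring_nf; omega,
    Nat.mul_add_div (by omega), Nat.div_eq_of_lt (by omega)]
  omega

lemma Int.dvd_mul_iff_ediv_gcd_dvd {m b u : ℤ} (hm : 0 < m) :
    m ∣ b * u ↔ m / gcd m b ∣ u := by
  constructor
  · intro h
    rw [← Int.modEq_zero_iff_dvd] at h ⊢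
    exact Int.ModEq.cancel_left_div_gcd hm (by rwa [mul_zero])
  · intro h
    rw [← Int.mul_ediv_cancel' (Int.gcd_dvd_left m b)]
    exact mul_dvd_mul (Int.gcd_dvd_right m b) h

lemma Int.isCoprime_ediv_gcd_two_mul_ediv_gcd {n : ℤ} (hn : Odd n) (a : ℤ) :
    IsCoprime (n / gcd n a) (2 * a / gcd n a) := by
  have hg : 0 < gcd n a := Int.gcd_pos_of_ne_zero_left a (by rintro rfl; simp at hn)
  have hodd : Odd (n / gcd n a) := by
    rw [← Int.mul_ediv_cancel' (Int.gcd_dvd_left n a)] at hn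
    exact (Int.odd_mul.mp hn).2
  rw [Int.mul_ediv_assoc 2 (Int.gcd_dvd_right n a)]
  exact (Int.isCoprime_two_right.mpr hodd).mul_right
    (Int.isCoprime_iff_gcd_eq_one.mpr (Int.gcd_div_gcd_div_gcd hg))

lemma card_filter_Icc_one_half_dvd_mul {m : ℕ} (hm : Odd m) (b : ℤ) :
    #((Icc 1 ((m - 1) / 2)).filter fun u : ℕ => (m : ℤ) ∣ b * u) = (Int.gcd m b - 1) / 2 := by
  set g := Int.gcd m b
  obtain ⟨e, hme⟩ : g ∣ m := Int.natCast_dvd_natCast.mp (Int.gcd_dvd_left _ _)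
  have hm0 : 0 < m := hm.pos
  have hg0 : 0 < g := Int.gcd_pos_of_ne_zero_left b (by exact_mod_cast hm0.ne')
  have hmg : (m : ℤ) / g = e := by
    rw [hme, Nat.cast_mul, Int.mul_ediv_cancel_left _ (by exact_mod_cast hg0.ne')]
  have hdvd (u : ℕ) : (m : ℤ) ∣ b * u ↔ e ∣ u := by
    rw [Int.dvd_mul_iff_ediv_gcd_dvd (by exact_mod_cast hm0), hmg, Int.natCast_dvd_natCast]
  obtain ⟨hg, he⟩ := Nat.odd_mul.mp (hme ▸ hm)
  rw [filter_congr fun u _ => hdvd u, ← zero_add 1, Icc_add_one_left_eq_Ioc,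
    Nat.Ioc_filter_dvd_card_eq_div, hme, mul_comm, Nat.odd_mul_sub_one_div_two_div he hg]

lemma ZMod.sum_Icc_one_natCast_eq_sum_univ {M : Type*} [AddCommMonoid M] (m : ℕ) [NeZero m]
    (f : ZMod m → M) : ∑ s ∈ Icc 1 m, f s = ∑ x, f x := by
  refine sum_nbij' (fun s => (s : ZMod m)) (fun x => if x = 0 then m else x.val)
    (by simp) ?_ ?_ ?_ (by simp)
  · intro x _
    split_ifs with hx
    · simp [NeZero.one_le]
    · simp [mem_Icc, Nat.one_le_iff_ne_zero, ZMod.val_eq_zero, hx, (ZMod.val_lt x).le]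
  · intro s hs
    obtain ⟨h1, h2⟩ := mem_Icc.mp hs
    rcases h2.lt_or_eq with hlt | rfl
    · have hs0 : (s : ZMod m) ≠ 0 := by
        rw [ne_eq, ← ZMod.val_eq_zero, ZMod.val_natCast_of_lt hlt]; omega
      simp [hs0, ZMod.val_natCast_of_lt hlt]
    · simp
  · intro x _
    split_ifs with hx
    · simp [hx]
    · simp

lemma ZMod.exp_two_pi_I_div_pow_val_eq_stdAddChar (N : ℕ) [NeZero N] (y : ZMod N) :
    Complex.exp (2 * Real.pi * Complex.I / N) ^ y.val = ZMod.stdAddChar y := by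
  rw [ZMod.stdAddChar_apply, ZMod.toCircle_apply, ← Complex.exp_nat_mul]
  ring_nf

lemma ZMod.stdAddChar_natCast_mul_eq_castHom (d m : ℕ) [NeZero d] [NeZero m] (y : ZMod (d * m)) :
    ZMod.stdAddChar ((d : ZMod (d * m)) * y) =
      ZMod.stdAddChar (ZMod.castHom (dvd_mul_left m d) (ZMod m) y) := by
  obtain ⟨x, rfl⟩ := ZMod.intCast_surjective y
  have hd : (d : ℂ) ≠ 0 := NeZero.ne _
  rw [map_intCast, ← Int.cast_natCast, ← Int.cast_mul, ZMod.stdAddChar_coe, ZMod.stdAddChar_coe]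
  congr 1
  push_cast
  field_simp

lemma ZMod.isUnit_castHom_inv {m n : ℕ} [NeZero n] (hmn : m ∣ n) {c : ZMod n}
    (hc : IsUnit (ZMod.castHom hmn (ZMod m) c)) : IsUnit (ZMod.castHom hmn (ZMod m) c⁻¹) := by
  -- `c⁻¹` is a junk value unless `c` is a unit, but still `c * c⁻¹ = gcd(c.val, n)`.
  have hcval : (c.val).Coprime m := by
    rwa [← ZMod.isUnit_iff_coprime, ← map_natCast (ZMod.castHom hmn (ZMod m)), ZMod.natCast_val,
      ZMod.cast_id]
  have hgcd : IsUnit ((Nat.gcd c.val n : ℕ) : ZMod m) :=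
    (ZMod.isUnit_iff_coprime _ _).mpr (hcval.coprime_dvd_left (Nat.gcd_dvd_left _ _))
  rw [← map_natCast (ZMod.castHom hmn (ZMod m)), ← ZMod.mul_inv_eq_gcd, map_mul] at hgcd
  exact isUnit_of_mul_isUnit_right hgcd

lemma sum_filter_dvd_exp_pow_val_natCast_mul (d m : ℕ) [NeZero d] [NeZero m]
    (k : ZMod (d * m)) :
    ∑ t ∈ (Icc 1 (d * m)).filter (d ∣ ·),
        Complex.exp (2 * Real.pi * Complex.I / (d * m : ℕ)) ^ ((t : ZMod (d * m)) * k).val =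
      if ZMod.castHom (dvd_mul_left m d) (ZMod m) k = 0 then (m : ℂ) else 0 := by
  rw [sum_filter_dvd_Icc_one (NeZero.pos d), Nat.mul_div_cancel_left _ (NeZero.pos d)]
  simp_rw [ZMod.exp_two_pi_I_div_pow_val_eq_stdAddChar, Nat.cast_mul, mul_assoc,
    ZMod.stdAddChar_natCast_mul_eq_castHom, map_mul, map_natCast]
  rw [ZMod.sum_Icc_one_natCast_eq_sum_univ m fun x => ZMod.stdAddChar (x * _),
    AddChar.sum_mulShift _ (ZMod.isPrimitive_stdAddChar m), ZMod.card, Nat.cast_ite,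
    Nat.cast_zero]

theorem stmt1_general (n : ℕ) (hn : Odd n) (A B : ℤ)
    (d : ℕ) (hd : d = Int.gcd (n : ℤ) A) :
    ∑ j ∈ (Finset.Icc 1 ((n - 1) / 2)).filter (fun j => d ∣ j),
      ∑ t ∈ (Finset.Icc 1 n).filter (fun t => d ∣ t),
        Complex.exp (2 * Real.pi * Complex.I / n) ^
          (((((-B) * ((j / d : ℕ) : ℤ) * (t : ℤ) : ℤ) : ZMod n) *
            (((2 * A / (d : ℤ) : ℤ)) : ZMod n)⁻¹).val) =
      ((n : ℂ) / (2 * (d : ℂ))) * ((Int.gcd ((n : ℤ) / (d : ℤ)) B : ℂ) - 1) := by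
  have hd0 : 0 < d := hd ▸ Int.gcd_pos_of_ne_zero_left A (by exact_mod_cast hn.pos.ne')
  obtain ⟨m, rfl⟩ : d ∣ n := Int.natCast_dvd_natCast.mp (hd ▸ Int.gcd_dvd_left _ _)
  obtain ⟨hd_odd, hm_odd⟩ := Nat.odd_mul.mp hn
  have : NeZero d := ⟨hd0.ne'⟩
  have : NeZero m := ⟨hm_odd.pos.ne'⟩
  have hmZ : ((d * m : ℕ) : ℤ) / d = m := by
    rw [Nat.cast_mul, Int.mul_ediv_cancel_left _ (by exact_mod_cast hd0.ne')]
  set c : ZMod (d * m) := ((2 * A / d : ℤ) : ZMod (d * m))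
  have hc : IsUnit (ZMod.castHom (dvd_mul_left m d) (ZMod m) c) := by
    have := Int.isCoprime_ediv_gcd_two_mul_ediv_gcd (n := (d * m : ℕ)) (by exact_mod_cast hn) A
    rwa [← hd, hmZ, ← ZMod.coe_int_isUnit_iff_isCoprime,
      ← map_intCast (ZMod.castHom (dvd_mul_left m d) (ZMod m))] at this
  have hinner (u : ℕ) :
      ∑ t ∈ (Icc 1 (d * m)).filter (d ∣ ·),
        Complex.exp (2 * Real.pi * Complex.I / (d * m : ℕ)) ^
          ((((-B) * ((d * u / d : ℕ) : ℤ) * (t : ℤ) : ℤ) : ZMod (d * m)) * c⁻¹).val =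
        if (m : ℤ) ∣ B * u then (m : ℂ) else 0 := by
    have hexp (t : ℕ) : (((-B) * (u : ℤ) * (t : ℤ) : ℤ) : ZMod (d * m)) * c⁻¹ =
        (t : ZMod (d * m)) * (((-B * u : ℤ) : ZMod (d * m)) * c⁻¹) := by
      push_cast; ring
    simp_rw [Nat.mul_div_cancel_left _ hd0, hexp, sum_filter_dvd_exp_pow_val_natCast_mul, map_mul,
      map_intCast, (ZMod.isUnit_castHom_inv _ hc).mul_left_eq_zero,
      ZMod.intCast_zmod_eq_zero_iff_dvd, neg_mul, dvd_neg]
  rw [sum_filter_dvd_Icc_one hd0, Nat.odd_mul_sub_one_div_two_div hd_odd hm_odd,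
    sum_congr rfl fun u _ => hinner u, sum_ite, sum_const_zero, add_zero, sum_const,
    card_filter_Icc_one_half_dvd_mul hm_odd, hmZ, nsmul_eq_mul]
  obtain ⟨y, hy⟩ := hm_odd.of_dvd_nat (Int.natCast_dvd_natCast.mp (Int.gcd_dvd_left m B))
  rw [hy, Nat.add_sub_cancel, Nat.mul_div_cancel_left _ two_pos]
  have hdC : (d : ℂ) ≠ 0 := NeZero.ne _
  push_cast
  field_simp
  ring

/-- Let `n` be an odd positive integer, `ζ = e^{2πi/n}`, and `A, B` nonzero integers, and
`d = gcd(n, A)`. Then the sum over `j` with `d ∣ j`, `1 ≤ j ≤ (n-1)/2`, and `t` with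
`d ∣ t`, `1 ≤ t ≤ n`, of `ζ^{-Bjt/(2A)}` equals `(n / (2d)) · (gcd(n/d, B) - 1)`.
The exponent `-Bjt/(2A)` is understood as `-B·(j/d)·t·(2A/d)⁻¹` computed in `ZMod n`. -/
theorem stmt1 (n : ℕ) (hn : Odd n) (hpos : 0 < n) (A B : ℤ) (hA : A ≠ 0) (hB : B ≠ 0)
    (d : ℕ) (hd : d = Int.gcd (n : ℤ) A) :
    ∑ j ∈ (Finset.Icc 1 ((n - 1) / 2)).filter (fun j => d ∣ j),
      ∑ t ∈ (Finset.Icc 1 n).filter (fun t => d ∣ t),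
        Complex.exp (2 * Real.pi * Complex.I / n) ^
          (((((-B) * ((j / d : ℕ) : ℤ) * (t : ℤ) : ℤ) : ZMod n) *
            (((2 * A / (d : ℤ) : ℤ)) : ZMod n)⁻¹).val) =
      ((n : ℂ) / (2 * (d : ℂ))) * ((Int.gcd ((n : ℤ) / (d : ℤ)) B : ℂ) - 1) :=
  stmt1_general n hn A B d hd
end

section
/- Let n be an odd positive integer and let p/q be a rational number in lowest terms with q odd (so that M(p/q) is a knot). The number of n-colorings of the rational (2-bridge) knot M(p/q) equals n · gcd(n, q). -/
/-!
If a homomorphism from the two-bridge group `⟨u, v ∣ u w = w v⟩` to `D_n` sends `u` to a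
reflection, it sends `v = w⁻¹ u w` to a reflection as well. Reflections are involutions, so the
signs `ε_i` in `w` play no role: with `u ↦ sr k`, `v ↦ sr l` and `q = 2t + 1`, the word `w` goes to
`(sr l · sr k)^t = r (t (k - l))` and the relator to `r (q (l - k))`. Hence these homomorphisms
correspond to the pairs `(k, l)` in `ZMod n` with `q (l - k) = 0`: `n` choices of `k` and
`gcd(n, q)` of the difference `l - k`.
-/

/-- The word `w = v^{ε₁} u^{ε₂} ⋯` of length `q - 1` appearing in the standard two-bridge
knot group presentation `⟨u, v ∣ u w = w v⟩` of the rational knot `M(p/q)`, where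
`ε_i = (-1)^{⌊i·p/q⌋}`; the generator `u` is `FreeGroup.of true`, `v` is
`FreeGroup.of false`, and the `i`-th letter (1-based) is `v` for `i` odd, `u` for `i` even. -/
def bridgeWord (p q : ℤ) : FreeGroup Bool :=
  ((List.range (q.toNat - 1)).map (fun i =>
    (FreeGroup.of (decide (i % 2 = 1)) : FreeGroup Bool) ^
      (if Even (Int.fdiv (((i : ℤ) + 1) * p) q) then (1 : ℤ) else -1))).prod

/-- The single relation `u · w · v⁻¹ · w⁻¹` of the two-bridge knot group. -/
def bridgeRel (p q : ℤ) : Set (FreeGroup Bool) :=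
  {FreeGroup.of true * bridgeWord p q * (FreeGroup.of false)⁻¹ * (bridgeWord p q)⁻¹}

theorem PresentedGroup.lift_of_eq_one_of_mem {α G : Type*} [Group G] {rels : Set (FreeGroup α)}
    (φ : PresentedGroup rels →* G) {w : FreeGroup α} (hw : w ∈ rels) :
    FreeGroup.lift (fun a => φ (.of a)) w = 1 := by
  have hcomp : φ.comp (PresentedGroup.mk rels) = FreeGroup.lift (fun a => φ (.of a)) :=
    FreeGroup.ext_hom _ _ fun a => by simp [PresentedGroup.of]
  rw [← hcomp, MonoidHom.comp_apply, PresentedGroup.one_of_mem hw, map_one]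

namespace DihedralGroup

variable {n : ℕ}

theorem exists_sr_eq_of_sr_mul_eq_mul {k : ZMod n} {g x : DihedralGroup n}
    (h : sr k * g = g * x) : ∃ l, x = sr l := by
  rw [eq_inv_mul_of_mul_eq h.symm]
  cases g <;> simp only [inv_r, inv_sr, r_mul_sr, sr_mul_r, sr_mul_sr] <;> exact ⟨_, rfl⟩

end DihedralGroup

theorem List.prod_map_range_two_mul {G : Type*} [Monoid G] (g : ℕ → G) (a b : G)
    (heven : ∀ i, g (2 * i) = a) (hodd : ∀ i, g (2 * i + 1) = b) (t : ℕ) :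
    ((List.range (2 * t)).map g).prod = (a * b) ^ t := by
  induction t with
  | zero => simp
  | succ t ih =>
    rw [Nat.mul_succ, List.prod_range_succ, List.prod_range_succ, ih, heven, hodd, pow_succ,
      mul_assoc]

section BridgeWord

variable {G : Type*} [Group G]

theorem lift_bridgeWord_of_inv_eq_self (f : Bool → G) (hf : ∀ b, (f b)⁻¹ = f b) (p q : ℤ)
    (t : ℕ) (hqt : q = 2 * t + 1) :
    FreeGroup.lift f (bridgeWord p q) = (f false * f true) ^ t := by
  have hlen : q.toNat - 1 = 2 * t := by omega
  -- `bridgeWord` runs over `List.range _` coerced to `List ℤ` through the list monad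
  have hindex : (do let a ← List.range (2 * t); pure (a : ℤ)) = (List.range (2 * t)).map (↑) :=
    List.flatMap_pure_eq_map _ _
  rw [bridgeWord, hlen, hindex, map_list_prod, List.map_map, List.map_map]
  apply List.prod_map_range_two_mul
  all_goals
    intro i
    simp only [Function.comp_apply, map_zpow, FreeGroup.lift_apply_of]
    split_ifs <;> simp [hf]

theorem bridgeWord_conj_of_lift_eq_one {f : Bool → G} {p q : ℤ}
    (h : ∀ w ∈ bridgeRel p q, FreeGroup.lift f w = 1) :
    f true * FreeGroup.lift f (bridgeWord p q) = FreeGroup.lift f (bridgeWord p q) * f false := by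
  have hrel := h _ rfl
  simp only [map_mul, map_inv, FreeGroup.lift_apply_of] at hrel
  exact mul_inv_eq_iff_eq_mul.mp (mul_inv_eq_one.mp hrel)

end BridgeWord

section Colorings

open DihedralGroup

variable {n : ℕ} {p q : ℤ}

def reflections (k l : ZMod n) : Bool → DihedralGroup n := fun b => cond b (sr k) (sr l)

theorem lift_reflections_bridgeRelator (k l : ZMod n) (hq : Odd q) (hq0 : 0 < q) :
    FreeGroup.lift (reflections k l)
        (FreeGroup.of true * bridgeWord p q * (FreeGroup.of false)⁻¹ * (bridgeWord p q)⁻¹) =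
      r ((q : ZMod n) * (l - k)) := by
  obtain ⟨t, hqt⟩ : ∃ t : ℕ, q = 2 * t + 1 := by
    obtain ⟨s, rfl⟩ := hq
    exact ⟨s.toNat, by omega⟩
  have hword := lift_bridgeWord_of_inv_eq_self (reflections k l)
    (fun b => by cases b <;> exact inv_sr _) p q t hqt
  simp only [map_mul, map_inv, FreeGroup.lift_apply_of, hword, reflections, cond_true, cond_false,
    sr_mul_sr, r_pow, inv_r, inv_sr, sr_mul_r, r_mul_r]
  congr 1
  rw [hqt]
  push_cast
  ring

theorem lift_reflections_eq_one_iff (k l : ZMod n) (hq : Odd q) (hq0 : 0 < q) :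
    (∀ w ∈ bridgeRel p q, FreeGroup.lift (reflections k l) w = 1) ↔
      (q : ZMod n) * (l - k) = 0 := by
  simp only [bridgeRel, Set.mem_singleton_iff, forall_eq, lift_reflections_bridgeRelator k l hq hq0,
    one_def, r.injEq]

def reflectionColoring (hq : Odd q) (hq0 : 0 < q)
    (x : {x : ZMod n × ZMod n // (q : ZMod n) * (x.2 - x.1) = 0}) :
    {φ : PresentedGroup (bridgeRel p q) →* DihedralGroup n // ∃ k, φ (.of true) = sr k} :=
  ⟨PresentedGroup.toGroup ((lift_reflections_eq_one_iff x.1.1 x.1.2 hq hq0).2 x.2),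
    x.1.1, PresentedGroup.toGroup.of _⟩

theorem reflectionColoring_bijective (hq : Odd q) (hq0 : 0 < q) :
    Function.Bijective (reflectionColoring (n := n) (p := p) hq hq0) := by
  constructor
  · rintro ⟨⟨k, l⟩, _⟩ ⟨⟨k', l'⟩, _⟩ h
    have hu := congrArg (fun φ => φ.1 (.of true)) h
    have hv := congrArg (fun φ => φ.1 (.of false)) h
    simp only [reflectionColoring, PresentedGroup.toGroup.of, reflections, cond_true, cond_false,
      sr.injEq] at hu hv
    subst hu hv
    rfl
  · rintro ⟨φ, k, hk⟩
    have hrel : ∀ w ∈ bridgeRel p q, FreeGroup.lift (fun b => φ (.of b)) w = 1 :=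
      fun w hw => PresentedGroup.lift_of_eq_one_of_mem φ hw
    have hconj := bridgeWord_conj_of_lift_eq_one hrel
    rw [hk] at hconj
    obtain ⟨l, hl⟩ := exists_sr_eq_of_sr_mul_eq_mul hconj
    have hφ : (fun b => φ (.of b)) = reflections k l := funext fun b => by cases b <;> assumption
    rw [hφ] at hrel
    refine ⟨⟨(k, l), (lift_reflections_eq_one_iff k l hq hq0).1 hrel⟩, ?_⟩
    exact Subtype.ext (PresentedGroup.ext fun b => by
      rw [reflectionColoring, PresentedGroup.toGroup.of, ← hφ])

end Colorings

theorem ZMod.card_intCast_mul_eq_zero (n : ℕ) [NeZero n] (m : ℤ) :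
    Nat.card {x : ZMod n // (m : ZMod n) * x = 0} = Int.gcd n m := by
  have hker (x : ZMod n) : (m : ZMod n) * x = 0 ↔ x ∈ (nsmulAddMonoidHom m.natAbs).ker := by
    rw [AddMonoidHom.mem_ker, nsmulAddMonoidHom_apply, nsmul_eq_mul]
    rcases Int.natAbs_eq m with h | h <;> rw [h] <;> simp
  rw [Nat.card_congr (Equiv.subtypeEquivRight hker), IsAddCyclic.card_nsmulAddMonoidHom_ker,
    Nat.card_zmod]
  rfl

theorem ZMod.card_intCast_mul_sub_eq_zero (n : ℕ) [NeZero n] (m : ℤ) :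
    Nat.card {x : ZMod n × ZMod n // (m : ZMod n) * (x.2 - x.1) = 0} = n * Int.gcd n m := by
  have shear : {x : ZMod n × ZMod n // (m : ZMod n) * (x.2 - x.1) = 0} ≃
      ZMod n × {d : ZMod n // (m : ZMod n) * d = 0} :=
    (Equiv.subtypeProdEquivSigmaSubtype fun k l => (m : ZMod n) * (l - k) = 0).trans <|
      (Equiv.sigmaCongrRight fun k => (Equiv.subRight k).subtypeEquiv
        (p := fun l => (m : ZMod n) * (l - k) = 0) (q := fun d => (m : ZMod n) * d = 0)
        fun _ => Iff.rfl).trans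
        (Equiv.sigmaEquivProd _ _)
  rw [Nat.card_congr shear, Nat.card_prod, Nat.card_zmod, card_intCast_mul_eq_zero]

theorem stmt5_general (n : ℕ) (h1 : 0 < n) (p q : ℤ) (hq : Odd q) (hq0 : 0 < q) :
    Nat.card {φ : PresentedGroup (bridgeRel p q) →* DihedralGroup n //
      ∃ k : ZMod n, φ (PresentedGroup.of true) = DihedralGroup.sr k} =
      n * Int.gcd (n : ℤ) q := by
  have : NeZero n := ⟨h1.ne'⟩
  rw [← Nat.card_congr (Equiv.ofBijective _ (reflectionColoring_bijective hq hq0)),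
    ZMod.card_intCast_mul_sub_eq_zero]

/-- Let `n` be an odd positive integer and `p/q` a rational number in lowest terms with
`q` odd and positive (so `M(p/q)` is a knot). The number of `n`-colorings of the rational
(2-bridge) knot `M(p/q)` equals `n · gcd(n, q)`.  Here the colorings are counted, via the
classical bijection, as homomorphisms from the knot group (given by its two-bridge
presentation) to the dihedral group `D_n` sending the meridian `u` to a reflection. -/
theorem stmt5 (n : ℕ) (hn : Odd n) (h1 : 0 < n) (p q : ℤ) (hq : Odd q) (hq0 : 0 < q)
    (hcop : IsCoprime p q) :
    Nat.card {φ : PresentedGroup (bridgeRel p q) →* DihedralGroup n //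
      ∃ k : ZMod n, φ (PresentedGroup.of true) = DihedralGroup.sr k} =
      n * Int.gcd (n : ℤ) q :=
  stmt5_general n h1 p q hq hq0
end

section
/- Let Γ be a finite group. For x ∈ Γ with centralizer C(x) and an irreducible character ρ of C(x), define χ_{c,ρ}: {(y,g) ∈ Γ² : yg = gy} → ℂ by χ_{c,ρ}(gxg⁻¹, ghg⁻¹) = ρ(h) for h ∈ C(x) and g ∈ Γ, and χ_{c,ρ}(y,k) = 0 if y is not conjugate to x. Then χ_{c,ρ} is well-defined, is invariant under simultaneous conjugation, and the family of all such functions (over all conjugacy classes c and irreducible ρ) is orthonormal with respect to the inner product (f₁,f₂) = (1/|Γ|)·∑_{xg=gx} f₁(x,g)·conj(f₂(x,g)). -/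
open scoped Classical

/-- `χ` is the function `χ_{c,ρ}` attached to the conjugacy class `c` of `x` and the
character `ρ` of the finite-dimensional representation `V` of the centralizer `C(x)`:
it satisfies `χ(gxg⁻¹, ghg⁻¹) = ρ(h)` for all `g ∈ Γ`, `h ∈ C(x)`, vanishes on pairs
whose first coordinate is not conjugate to `x`, and vanishes on non-commuting pairs. -/
def IsChi {Γ : Type} [Group Γ] (x : Γ)
    (V : FDRep ℂ (Subgroup.centralizer ({x} : Set Γ))) (χ : Γ → Γ → ℂ) : Prop :=
  (∀ (g : Γ) (h : Subgroup.centralizer ({x} : Set Γ)),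
    χ (g * x * g⁻¹) (g * (h : Γ) * g⁻¹) = V.character h) ∧
  (∀ y k : Γ, (¬ ∃ g : Γ, y = g * x * g⁻¹) → χ y k = 0) ∧
  (∀ y k : Γ, y * k ≠ k * y → χ y k = 0)

/-! On commuting pairs `(gxg⁻¹, k)` the value of `χ_{c,ρ}` is forced to be `ρ(g⁻¹kg)`, which does not
depend on the choice of `g` since `ρ` is a class function on `C(x)`; uniqueness applied to
`(y, k) ↦ χ(aya⁻¹, aka⁻¹)` gives conjugation invariance. Functions attached to non-conjugate classes
have disjoint supports. Otherwise, after transporting `ρ'` along `C(x) ≃ C(bxb⁻¹)` both live over the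
same `x`, and counting the fibres of `g ↦ gxg⁻¹` turns `|Γ|⁻¹ ∑ χ χ'‾` into
`|C(x)|⁻¹ ∑_{h ∈ C(x)} ρ(h) ρ'(h)‾`, the Schur inner product of two irreducible characters of `C(x)`.
Here `ρ'(h)‾ = ρ'(h⁻¹)` because `ρ'(h)` is the trace of a diagonalizable operator whose eigenvalues
are roots of unity. -/

open Module Polynomial Subgroup CategoryTheory
open scoped Finset

namespace Module.End

variable {K V : Type*} [Field K] [AddCommGroup V] [Module K V] [FiniteDimensional K V]

lemma trace_eq_sum_mul_finrank_eigenspace {f g : End K V} (hf : ⨆ μ, f.eigenspace μ = ⊤)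
    (φ : K → K) (hg : ∀ μ, ∀ v ∈ f.eigenspace μ, g v = φ μ • v) :
    LinearMap.trace K V g =
      ∑ μ ∈ f.finite_hasEigenvalue.toFinset, φ μ * finrank K (f.eigenspace μ) := by
  have hmaps (μ : K) : Set.MapsTo g (f.eigenspace μ) (f.eigenspace μ) := fun v hv => by
    rw [SetLike.mem_coe, hg μ v hv]
    exact Submodule.smul_mem _ _ hv
  have hint : DirectSum.IsInternal f.eigenspace :=
    (DirectSum.isInternal_submodule_iff_iSupIndep_and_iSup_eq_top _).mpr
      ⟨f.eigenspaces_iSupIndep, hf⟩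
  rw [LinearMap.trace_eq_sum_trace_restrict' hint f.finite_hasEigenvalue hmaps]
  refine Finset.sum_congr rfl fun μ _ => ?_
  have hres : g.restrict (hmaps μ) = φ μ • 1 := by
    ext v
    exact hg μ v v.2
  rw [hres, map_smul, LinearMap.trace_one, smul_eq_mul]

lemma trace_eq_conj_trace_of_pow_eq_one {E : Type*} [AddCommGroup E] [Module ℂ E]
    [FiniteDimensional ℂ E] {f g : End ℂ E} {n : ℕ} (hn : n ≠ 0) (hf : f ^ n = 1)
    (hgf : g * f = 1) :
    LinearMap.trace ℂ E g = starRingEnd ℂ (LinearMap.trace ℂ E f) := by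
  have hroot : aeval f (X ^ n - C 1 : ℂ[X]) = 0 := by simp [hf]
  have hss : f.IsSemisimple := isSemisimple_of_squarefree_aeval_eq_zero
    (separable_X_pow_sub_C 1 (Nat.cast_ne_zero.mpr hn) one_ne_zero).squarefree hroot
  have hf_on (μ : ℂ) (v) (hv : v ∈ f.eigenspace μ) : f v = μ • v := mem_eigenspace_iff.mp hv
  have hg_on (μ : ℂ) (v) (hv : v ∈ f.eigenspace μ) : g v = μ⁻¹ • v := by
    have hv' : v = μ • g v := by
      rw [← map_smul, ← hf_on μ v hv, ← Module.End.mul_apply, hgf, Module.End.one_apply]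
    rcases eq_or_ne μ 0 with rfl | hμ
    · rw [zero_smul] at hv'
      simp [hv']
    · rw [hv', inv_smul_smul₀ hμ, ← hv']
  rw [trace_eq_sum_mul_finrank_eigenspace hss.iSup_eigenspace_eq_top _ hg_on,
    trace_eq_sum_mul_finrank_eigenspace hss.iSup_eigenspace_eq_top _ hf_on, map_sum]
  refine Finset.sum_congr rfl fun μ hμ => ?_
  obtain ⟨v, hv⟩ := (Set.Finite.mem_toFinset _).mp hμ |>.exists_hasEigenvector
  have hμn : μ ^ n = 1 := by
    have := hv.pow_apply n
    rw [hf, Module.End.one_apply] at this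
    exact (smul_left_injective ℂ hv.2 (this.symm.trans (one_smul ℂ v).symm))
  rw [Complex.inv_eq_conj (Complex.norm_eq_one_of_pow_eq_one hμn hn), map_mul, map_natCast]

end Module.End

lemma FDRep.char_inv_eq_conj {G : Type*} [Group G] [Finite G] (W : FDRep ℂ G) (g : G) :
    W.character g⁻¹ = starRingEnd ℂ (W.character g) :=
  Module.End.trace_eq_conj_trace_of_pow_eq_one (orderOf_pos g).ne'
    (by rw [← map_pow, pow_orderOf_eq_one, map_one])
    (by rw [← map_mul, inv_mul_cancel, map_one])

lemma FDRep.char_orthonormal_conj {G : Type*} [Group G] [Fintype G] (V W : FDRep ℂ G)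
    [Simple V] [Simple W] :
    (Nat.card G : ℂ)⁻¹ * ∑ g : G, V.character g * starRingEnd ℂ (W.character g) =
      if Nonempty (V ≅ W) then 1 else 0 := by
  simp_rw [← FDRep.char_inv_eq_conj]
  exact FDRep.char_orthonormal V W

section ConjugationInGroups

variable {Γ : Type*} [Group Γ]

lemma conj_mem_centralizer_singleton_iff {x g k : Γ} :
    g⁻¹ * k * g ∈ centralizer {x} ↔ g * x * g⁻¹ * k = k * (g * x * g⁻¹) := by
  rw [mem_centralizer_singleton_iff, ← (MulAut.conj g).injective.eq_iff, eq_comm]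
  simp [mul_assoc]

lemma conj_eq_conj_iff {x g g₀ : Γ} :
    g * x * g⁻¹ = g₀ * x * g₀⁻¹ ↔ g₀⁻¹ * g ∈ centralizer {x} := by
  rw [mem_centralizer_singleton_iff, ← (MulAut.conj g₀⁻¹).injective.eq_iff,
    ← mul_inv_eq_iff_eq_mul]
  simp [mul_assoc]

lemma conj_mem_centralizer_conj {x b h : Γ} (hh : h ∈ centralizer {x}) :
    b * h * b⁻¹ ∈ centralizer {b * x * b⁻¹} := by
  rw [mem_centralizer_singleton_iff] at hh ⊢
  simp only [← MulAut.conj_apply, ← map_mul, hh]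

@[simps]
def centralizerConjEquiv (x b : Γ) : centralizer {x} ≃* centralizer {b * x * b⁻¹} where
  toFun h := ⟨b * h * b⁻¹, conj_mem_centralizer_conj h.2⟩
  invFun h := ⟨b⁻¹ * h * b, by simpa [mul_assoc] using conj_mem_centralizer_conj (b := b⁻¹) h.2⟩
  left_inv h := by ext; simp [mul_assoc]
  right_inv h := by ext; simp [mul_assoc]
  map_mul' h₁ h₂ := by ext; simp [mul_assoc]

lemma exists_eq_conj_iff_isConj {x y : Γ} : (∃ g, y = g * x * g⁻¹) ↔ IsConj x y := by
  simp_rw [isConj_iff, eq_comm]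

end ConjugationInGroups

section Sums

variable {Γ : Type*} [Group Γ] [Fintype Γ]

lemma card_filter_conj_eq_conj (x g₀ : Γ) :
    #{g | g * x * g⁻¹ = g₀ * x * g₀⁻¹} = Nat.card (centralizer {x}) := by
  rw [← Fintype.card_subtype, ← Nat.card_eq_fintype_card]
  exact Nat.card_congr ((Equiv.mulLeft g₀⁻¹).subtypeEquiv fun g => conj_eq_conj_iff)

lemma sum_conj_eq_card_centralizer_mul_sum (x : Γ) (f : Γ → ℂ)
    (hf : ∀ y, (¬∃ g, y = g * x * g⁻¹) → f y = 0) :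
    ∑ g, f (g * x * g⁻¹) = Nat.card (centralizer {x}) * ∑ y, f y := by
  rw [← Finset.sum_fiberwise' Finset.univ (fun g => g * x * g⁻¹) f, Finset.mul_sum]
  refine Finset.sum_congr rfl fun y _ => ?_
  rw [Finset.sum_const]
  by_cases hy : ∃ g, y = g * x * g⁻¹
  · obtain ⟨g₀, rfl⟩ := hy
    rw [card_filter_conj_eq_conj, nsmul_eq_mul]
  · simp [hf y hy]

lemma card_centralizer_mul_sum_eq (x : Γ) (F : Γ → Γ → ℂ)
    (hconj : ∀ a y k, F (a * y * a⁻¹) (a * k * a⁻¹) = F y k)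
    (hclass : ∀ y k, (¬∃ g, y = g * x * g⁻¹) → F y k = 0)
    (hcomm : ∀ y k, y * k ≠ k * y → F y k = 0) :
    Nat.card (centralizer {x}) * ∑ y, ∑ k, F y k =
      Fintype.card Γ * ∑ h : centralizer {x}, F x h := by
  have hrow (g : Γ) : ∑ k, F (g * x * g⁻¹) k = ∑ k, F x k := by
    rw [← (MulAut.conj g).toEquiv.sum_comp]
    exact Finset.sum_congr rfl fun k _ => hconj g x k
  have hcent : ∑ k, F x k = ∑ h : centralizer {x}, F x h := by
    rw [← Finset.sum_filter_of_ne (p := (· ∈ centralizer {x})),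
      Finset.sum_subtype (p := (· ∈ centralizer {x})) _ fun k => by simp]
    intro k _ hk
    by_contra hk'
    exact hk (hcomm x k (by rwa [mem_centralizer_singleton_iff, eq_comm] at hk'))
  rw [← sum_conj_eq_card_centralizer_mul_sum x _
    fun y hy => Finset.sum_eq_zero fun k _ => hclass y k hy]
  simp_rw [hrow]
  rw [Finset.sum_const, Finset.card_univ, nsmul_eq_mul, hcent]

end Sums

section ChiFun

variable {Γ : Type} [Group Γ] (x : Γ) (V : FDRep ℂ (centralizer {x}))

noncomputable def chiFun (y k : Γ) : ℂ :=
  if hy : ∃ g, y = g * x * g⁻¹ then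
    Function.extend Subtype.val V.character 0 (hy.choose⁻¹ * k * hy.choose)
  else 0

lemma isChi_chiFun : IsChi x V (chiFun x V) := by
  refine ⟨fun g h => ?_, fun y k hy => dif_neg hy, fun y k hyk => ?_⟩
  · have hy : ∃ g', g * x * g⁻¹ = g' * x * g'⁻¹ := ⟨g, rfl⟩
    set g₀ := hy.choose
    have hc : g₀⁻¹ * g ∈ centralizer {x} := conj_eq_conj_iff.mp hy.choose_spec
    have hconj : g₀⁻¹ * (g * h * g⁻¹) * g₀ = ↑(⟨_, hc⟩ * h * (⟨_, hc⟩ : centralizer {x})⁻¹) := by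
      simp [mul_assoc]
    rw [chiFun, dif_pos hy, hconj, Subtype.val_injective.extend_apply, FDRep.char_conj]
  · rw [chiFun]
    split_ifs with hy
    · rw [Function.extend_apply']
      · rfl
      rintro ⟨h, hh⟩
      rw [hy.choose_spec] at hyk
      exact hyk (conj_mem_centralizer_singleton_iff.mp (hh ▸ h.2))
    · rfl

end ChiFun

namespace IsChi

variable {Γ : Type} [Group Γ] {x : Γ} {V : FDRep ℂ (centralizer {x})} {χ χ' : Γ → Γ → ℂ}

lemma apply_conj (hχ : IsChi x V χ) (g : Γ) {k : Γ} (hk : g⁻¹ * k * g ∈ centralizer {x}) :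
    χ (g * x * g⁻¹) k = V.character ⟨g⁻¹ * k * g, hk⟩ := by
  simpa [mul_assoc] using hχ.1 g ⟨_, hk⟩

lemma apply_self (hχ : IsChi x V χ) (h : centralizer {x}) : χ x h = V.character h := by
  simpa using hχ.1 1 h

lemma unique (hχ : IsChi x V χ) (hχ' : IsChi x V χ') : χ = χ' := by
  funext y k
  by_cases hy : ∃ g, y = g * x * g⁻¹
  · obtain ⟨g, rfl⟩ := hy
    by_cases hk : g⁻¹ * k * g ∈ centralizer {x}
    · rw [hχ.apply_conj g hk, hχ'.apply_conj g hk]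
    · rw [conj_mem_centralizer_singleton_iff] at hk
      rw [hχ.2.2 _ _ hk, hχ'.2.2 _ _ hk]
  · rw [hχ.2.1 _ _ hy, hχ'.2.1 _ _ hy]

lemma comp_conj (hχ : IsChi x V χ) (a : Γ) :
    IsChi x V (fun y k => χ (a * y * a⁻¹) (a * k * a⁻¹)) := by
  refine ⟨fun g h => ?_, fun y k hy => hχ.2.1 _ _ ?_, fun y k hyk => hχ.2.2 _ _ ?_⟩
  · simpa [mul_assoc] using hχ.1 (a * g) h
  · rintro ⟨g, hg⟩
    exact hy ⟨a⁻¹ * g, by rw [show y = a⁻¹ * (a * y * a⁻¹) * a by group, hg]; group⟩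
  · simpa only [← MulAut.conj_apply, ← map_mul, (MulAut.conj a).injective.ne_iff] using hyk

lemma conj_invariant (hχ : IsChi x V χ) (a y k : Γ) :
    χ (a * y * a⁻¹) (a * k * a⁻¹) = χ y k :=
  congrFun₂ ((hχ.comp_conj a).unique hχ) y k

lemma res_centralizerConjEquiv {b : Γ} {W : FDRep ℂ (centralizer {b * x * b⁻¹})}
    (hχ : IsChi (b * x * b⁻¹) W χ) :
    IsChi x ((Action.resEquiv _ (centralizerConjEquiv x b)).functor.obj W) χ := by
  refine ⟨fun g h => ?_, fun y k hy => hχ.2.1 _ _ ?_, hχ.2.2⟩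
  · change _ = W.character (centralizerConjEquiv x b h)
    simpa [mul_assoc] using hχ.1 (g * b⁻¹) (centralizerConjEquiv x b h)
  · rintro ⟨g, rfl⟩
    exact hy ⟨g * b, by simp [mul_assoc]⟩

lemma of_iso {W : FDRep ℂ (centralizer {x})} (hχ : IsChi x W χ) (i : V ≅ W) : IsChi x V χ :=
  ⟨fun g h => (hχ.1 g h).trans (congrFun (FDRep.char_iso i) h).symm, hχ.2⟩

lemma eq_zero_of_not_isConj (hχ : IsChi x V χ) {y : Γ} (hy : ¬IsConj x y) (k : Γ) : χ y k = 0 :=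
  hχ.2.1 y k (by rwa [exists_eq_conj_iff_isConj])

variable [Fintype Γ]

lemma ne_of_not_isConj [Simple V] {x' : Γ} {W : FDRep ℂ (centralizer {x'})}
    (hχ : IsChi x V χ) (hχ' : IsChi x' W χ') (hx : ¬IsConj x x') : χ ≠ χ' := by
  intro heq
  have hzero (h : centralizer {x}) : V.character h = 0 := by
    rw [← hχ.apply_self, heq, hχ'.eq_zero_of_not_isConj fun h => hx h.symm]
  simpa [hzero] using FDRep.char_orthonormal_conj V V

lemma sum_mul_conj_eq_zero_of_not_isConj {x' : Γ} {W : FDRep ℂ (centralizer {x'})}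
    (hχ : IsChi x V χ) (hχ' : IsChi x' W χ') (hx : ¬IsConj x x') :
    ∑ y, ∑ k, χ y k * starRingEnd ℂ (χ' y k) = 0 := by
  refine Finset.sum_eq_zero fun y _ => Finset.sum_eq_zero fun k _ => ?_
  by_cases hy : IsConj x y
  · rw [hχ'.eq_zero_of_not_isConj (fun hy' => hx (hy.trans hy'.symm)), map_zero, mul_zero]
  · rw [hχ.eq_zero_of_not_isConj hy, zero_mul]

lemma inner_eq_of_same {W : FDRep ℂ (centralizer {x})} [Simple V] [Simple W]
    (hχ : IsChi x V χ) (hχ' : IsChi x W χ') :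
    1 / (Fintype.card Γ : ℂ) * ∑ y, ∑ k, χ y k * starRingEnd ℂ (χ' y k) =
      if χ = χ' then 1 else 0 := by
  have hsum := card_centralizer_mul_sum_eq x (fun y k => χ y k * starRingEnd ℂ (χ' y k))
    (fun a y k => by simp only [hχ.conj_invariant, hχ'.conj_invariant])
    (fun y k hy => by simp [hχ.2.1 y k hy])
    (fun y k hyk => by simp [hχ.2.2 y k hyk])
  simp only [hχ.apply_self, hχ'.apply_self] at hsum
  have hC : (Nat.card (centralizer {x}) : ℂ) ≠ 0 := Nat.cast_ne_zero.mpr Nat.card_pos.ne'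
  have hΓ : (Fintype.card Γ : ℂ) ≠ 0 := Nat.cast_ne_zero.mpr Fintype.card_ne_zero
  have hchar : ∑ h : centralizer {x}, V.character h * starRingEnd ℂ (W.character h) =
      Nat.card (centralizer {x}) * if χ = χ' then 1 else 0 := by
    rw [← inv_mul_eq_iff_eq_mul₀ hC]
    split_ifs with heq
    · have hVW (h : centralizer {x}) : W.character h = V.character h := by
        rw [← hχ.apply_self, ← hχ'.apply_self, heq]
      simp_rw [hVW]
      rw [FDRep.char_orthonormal_conj, if_pos ⟨Iso.refl V⟩]
    · rw [FDRep.char_orthonormal_conj, if_neg]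
      rintro ⟨i⟩
      exact heq (hχ.unique (hχ'.of_iso i))
  rw [hchar] at hsum
  rw [one_div, inv_mul_eq_iff_eq_mul₀ hΓ]
  apply mul_left_cancel₀ hC
  rw [hsum]
  ring

lemma inner_eq {x' : Γ} {W : FDRep ℂ (centralizer {x'})} [Simple V] [Simple W]
    (hχ : IsChi x V χ) (hχ' : IsChi x' W χ') :
    1 / (Fintype.card Γ : ℂ) * ∑ y, ∑ k, χ y k * starRingEnd ℂ (χ' y k) =
      if χ = χ' then 1 else 0 := by
  by_cases hx : ∃ b, x' = b * x * b⁻¹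
  · obtain ⟨b, rfl⟩ := hx
    have : Simple ((Action.resEquiv _ (centralizerConjEquiv x b)).functor.obj W) :=
      simple_obj _ _
    exact hχ.inner_eq_of_same hχ'.res_centralizerConjEquiv
  · rw [exists_eq_conj_iff_isConj] at hx
    rw [if_neg (hχ.ne_of_not_isConj hχ' hx), hχ.sum_mul_conj_eq_zero_of_not_isConj hχ' hx,
      mul_zero]

end IsChi

/-- For a finite group `Γ`, an element `x` with centralizer `C(x)` and an irreducible
character `ρ` (of a simple representation `V`) of `C(x)`, the function `χ_{c,ρ}` with
`χ_{c,ρ}(gxg⁻¹, ghg⁻¹) = ρ(h)` and `χ_{c,ρ}(y,k) = 0` for `y` not conjugate to `x` is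
well-defined (exists and is unique), is invariant under simultaneous conjugation, and the
family of all such functions is orthonormal with respect to
`(f₁,f₂) = (1/|Γ|)·∑_{xg=gx} f₁(x,g)·conj(f₂(x,g))`. -/
theorem stmt8 (Γ : Type) [Group Γ] [Fintype Γ] (x : Γ)
    (V : FDRep ℂ (Subgroup.centralizer ({x} : Set Γ))) (hV : CategoryTheory.Simple V) :
    (∃! χ : Γ → Γ → ℂ, IsChi x V χ) ∧
    (∀ χ : Γ → Γ → ℂ, IsChi x V χ →
      ∀ a y k : Γ, χ (a * y * a⁻¹) (a * k * a⁻¹) = χ y k) ∧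
    (∀ (x' : Γ) (V' : FDRep ℂ (Subgroup.centralizer ({x'} : Set Γ))),
      CategoryTheory.Simple V' →
      ∀ χ χ' : Γ → Γ → ℂ, IsChi x V χ → IsChi x' V' χ' →
        (1 / (Fintype.card Γ : ℂ)) *
            ∑ y : Γ, ∑ k : Γ, χ y k * (starRingEnd ℂ) (χ' y k) =
          if χ = χ' then 1 else 0) :=
  ⟨⟨chiFun x V, isChi_chiFun x V, fun _ hχ => hχ.unique (isChi_chiFun x V)⟩,
    fun _ hχ => hχ.conj_invariant,
    fun _ _ _ _ _ hχ hχ' => hχ.inner_eq hχ'⟩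
end

section
/- Let Γ be a finite group and let E be the space of conjugation-invariant functions on commuting pairs of Γ. Define the action of SL(2,ℤ) on E by (M·f)(x,g) = f(x^a g^b, x^c g^d) for M = [[a,b],[c,d]], restricted to commuting pairs (x,g). Then for Q = [[1,0],[1,1]], each basis function χ_{c,ρ} is an eigenvector of Q with eigenvalue θ_{c,ρ} = χ_{c,ρ}(x,x)/χ_{c,ρ}(x,e) = ρ(x)/ρ(e) for any x ∈ c, where ρ(x) is a scalar since x is central in C(x). -/
open CategoryTheory

namespace FDRep

variable {k G : Type*} [Field k] [Group G] (V : FDRep k G)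

theorem exists_ρ_eq_smul_id_of_mem_center [IsAlgClosed k] [Simple V] {z : G}
    (hz : z ∈ Subgroup.center G) : ∃ c : k, V.ρ z = c • LinearMap.id := by
  let f : V ⟶ V :=
    { hom := FGModuleCat.ofHom (V.ρ z)
      comm := fun g => by
        apply FGModuleCat.hom_ext
        show V.ρ z ∘ₗ V.ρ g = V.ρ g ∘ₗ V.ρ z
        rw [← Module.End.mul_eq_comp, ← Module.End.mul_eq_comp, ← map_mul, ← map_mul,
          Subgroup.mem_center_iff.1 hz g] }
  obtain ⟨c, hc⟩ := endomorphism_simple_eq_smul_id k f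
  exact ⟨c, congrArg (fun f : V ⟶ V => f.hom.hom.hom) hc.symm⟩

theorem finrank_ne_zero_of_simple [Simple V] : Module.finrank k V ≠ 0 := by
  intro h
  have : Subsingleton V := Module.finrank_zero_iff.1 h
  exact id_nonzero V (by ext; exact Subsingleton.elim _ _)

theorem character_mul_of_mem_center [IsAlgClosed k] [CharZero k] [Simple V] {z : G}
    (hz : z ∈ Subgroup.center G) (h : G) :
    V.character (z * h) = V.character z / V.character 1 * V.character h := by
  obtain ⟨c, hc⟩ := V.exists_ρ_eq_smul_id_of_mem_center hz
  have hmul : ∀ h, V.character (z * h) = c * V.character h := fun h => by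
    simp [character, hc, Module.End.mul_eq_comp]
  have hd : (Module.finrank k V : k) ≠ 0 := Nat.cast_ne_zero.2 V.finrank_ne_zero_of_simple
  rw [hmul, ← mul_one z, hmul, char_one, mul_div_cancel_right₀ _ hd]

end FDRep

namespace Subgroup

variable {G : Type*} [Group G]

theorem mk_self_mem_center_centralizer_singleton (x : G) :
    (⟨x, mem_centralizer_singleton_iff.2 rfl⟩ : centralizer ({x} : Set G)) ∈
      center (centralizer ({x} : Set G)) :=
  mem_center_iff.2 fun h => Subtype.ext (mem_centralizer_singleton_iff.1 h.2)

theorem exists_eq_conj_of_commute_conj {x a g : G} (hg : a * x * a⁻¹ * g = g * (a * x * a⁻¹)) :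
    ∃ k : centralizer ({x} : Set G), g = a * k * a⁻¹ := by
  refine ⟨⟨a⁻¹ * g * a, mem_centralizer_singleton_iff.2 ?_⟩, by group⟩
  calc a⁻¹ * g * a * x = a⁻¹ * (g * (a * x * a⁻¹)) * a := by group
    _ = a⁻¹ * (a * x * a⁻¹ * g) * a := by rw [hg]
    _ = x * (a⁻¹ * g * a) := by group

end Subgroup

theorem stmt12_general (Γ : Type) [Group Γ] (x : Γ)
    (V : FDRep ℂ (Subgroup.centralizer ({x} : Set Γ))) (hV : CategoryTheory.Simple V)
    (χ : Γ → Γ → ℂ) (h : IsChi x V χ) :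
    ∀ y g : Γ, y * g = g * y → χ y (y * g) = (χ x x / χ x 1) * χ y g := by
  intro y g hyg
  obtain ⟨hχ, hχ_off_class, -⟩ := h
  by_cases hy : ∃ a : Γ, y = a * x * a⁻¹
  swap
  · rw [hχ_off_class _ _ hy, hχ_off_class _ _ hy, mul_zero]
  obtain ⟨a, rfl⟩ := hy
  obtain ⟨k, rfl⟩ := Subgroup.exists_eq_conj_of_commute_conj hyg
  let xc : Subgroup.centralizer ({x} : Set Γ) :=
    ⟨x, Subgroup.mem_centralizer_singleton_iff.2 rfl⟩
  have hχxx : χ x x = V.character xc := by simpa using hχ 1 xc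
  have hχx1 : χ x 1 = V.character 1 := by simpa using hχ 1 1
  have hmul : a * x * a⁻¹ * (a * k * a⁻¹) = a * ↑(xc * k) * a⁻¹ := by
    simp only [Subgroup.coe_mul, xc]; group
  rw [hmul, hχ, hχ, hχxx, hχx1]
  exact V.character_mul_of_mem_center (Subgroup.mk_self_mem_center_centralizer_singleton x) k

/-- Under the `SL(2,ℤ)`-action `(M·f)(x,g) = f(x^a g^b, x^c g^d)` on the space `E` of
conjugation-invariant functions on commuting pairs, the matrix `Q = [[1,0],[1,1]]` acts by
`(Q·f)(y,g) = f(y, y·g)`; each basis function `χ_{c,ρ}` is an eigenvector of `Q` with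
eigenvalue `θ_{c,ρ} = χ_{c,ρ}(x,x)/χ_{c,ρ}(x,e)` (which equals `ρ(x)/ρ(e)`, a scalar by
Schur's lemma since `x` is central in `C(x)`), for any representative `x` of `c`. -/
theorem stmt12 (Γ : Type) [Group Γ] [Fintype Γ] (x : Γ)
    (V : FDRep ℂ (Subgroup.centralizer ({x} : Set Γ))) (hV : CategoryTheory.Simple V)
    (χ : Γ → Γ → ℂ) (h : IsChi x V χ) :
    ∀ y g : Γ, y * g = g * y → χ y (y * g) = (χ x x / χ x 1) * χ y g :=
  stmt12_general Γ x V hV χ h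
end
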